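/- Let L, L⋆ ∈ ℝ^{n₁×r'}, R, R⋆ ∈ ℝ^{n₂×r'} (possibly padding with zero columns so dimensions match), and define F = [L; R] (vertical stack) and F⋆ = [L⋆; R⋆]. If LᵀL = RᵀR and L⋆ᵀL⋆ = R⋆ᵀR⋆ (balanced factorizations), then ‖FFᵀ − F⋆F⋆ᵀ‖_F ≤ 2‖LRᵀ − L⋆R⋆ᵀ‖_F. -/
import Mathlib


open Matrix

/-- Squared Frobenius norm of a real matrix. -/
noncomputable def frobSq {m n : Type*} [Fintype m] [Fintype n] (A : Matrix m n ℝ) : ℝ :=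
  ∑ i, ∑ j, (A i j)^2

/-- Frobenius norm of a real matrix. -/
noncomputable def frob {m n : Type*} [Fintype m] [Fintype n] (A : Matrix m n ℝ) : ℝ :=
  Real.sqrt (frobSq A)

/-- Vertical stack `F = [L; R]`. -/
def vstack {n₁ n₂ r : ℕ} (L : Matrix (Fin n₁) (Fin r) ℝ) (R : Matrix (Fin n₂) (Fin r) ℝ) :
    Matrix (Fin n₁ ⊕ Fin n₂) (Fin r) ℝ :=
  Matrix.of (fun i j => Sum.elim (fun i₁ => L i₁ j) (fun i₂ => R i₂ j) i)

lemma frobSq_eq_trace {m n : Type*} [Fintype m] [Fintype n] (A : Matrix m n ℝ) :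
    frobSq A = (A * Aᵀ).trace := by
  simp [frobSq, Matrix.trace, Matrix.diag, Matrix.mul_apply, sq]

lemma frobSq_nonneg {m n : Type*} [Fintype m] [Fintype n] (A : Matrix m n ℝ) :
    0 ≤ frobSq A := by
  unfold frobSq; positivity

lemma tr_mul_transpose_comm {m n : Type*} [Fintype m] [Fintype n] (A B : Matrix m n ℝ) :
    (A * Bᵀ).trace = (B * Aᵀ).trace := by
  rw [← Matrix.trace_transpose (A * Bᵀ), transpose_mul, transpose_transpose,
    Matrix.trace_mul_comm]

lemma tr_transpose_mul {m n : Type*} [Fintype m] [Fintype n] (M N : Matrix m n ℝ) :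
    (Mᵀ * N).trace = (M * Nᵀ).trace := by
  rw [Matrix.trace_mul_comm, tr_mul_transpose_comm]

lemma tr4 {m p r : Type*} [Fintype m] [Fintype p] [Fintype r]
    (A C : Matrix m r ℝ) (B D : Matrix p r ℝ) :
    ((A * Bᵀ) * (C * Dᵀ)ᵀ).trace = ((Cᵀ * A) * (Dᵀ * B)ᵀ).trace := by
  rw [transpose_mul, transpose_transpose, transpose_mul, transpose_transpose]
  rw [show A * Bᵀ * (D * Cᵀ) = (A * Bᵀ * D) * Cᵀ by simp only [Matrix.mul_assoc],
    Matrix.trace_mul_comm]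
  simp only [Matrix.mul_assoc]

lemma vstack_tmul {n₁ n₂ r : ℕ} (L L' : Matrix (Fin n₁) (Fin r) ℝ)
    (R R' : Matrix (Fin n₂) (Fin r) ℝ) :
    (vstack L R)ᵀ * (vstack L' R') = Lᵀ * L' + Rᵀ * R' := by
  ext i j
  simp [vstack, Matrix.mul_apply, Fintype.sum_sum_type]

lemma frobSq_sub {m n : Type*} [Fintype m] [Fintype n] (A B : Matrix m n ℝ) :
    frobSq (A - B) = (A * Aᵀ).trace + (B * Bᵀ).trace - 2 * (A * Bᵀ).trace := by
  rw [frobSq_eq_trace, transpose_sub, Matrix.sub_mul, Matrix.mul_sub, Matrix.mul_sub,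
    Matrix.trace_sub, Matrix.trace_sub, Matrix.trace_sub, tr_mul_transpose_comm B A]
  ring

theorem lifted_error_key_identity
    {n₁ n₂ r' : ℕ}
    (L Lstar : Matrix (Fin n₁) (Fin r') ℝ) (R Rstar : Matrix (Fin n₂) (Fin r') ℝ)
    (hbal : Lᵀ * L = Rᵀ * R)
    (hbal_star : Lstarᵀ * Lstar = Rstarᵀ * Rstar)
    (F : Matrix (Fin n₁ ⊕ Fin n₂) (Fin r') ℝ) (hF : F = vstack L R)
    (Fstar : Matrix (Fin n₁ ⊕ Fin n₂) (Fin r') ℝ) (hFstar : Fstar = vstack Lstar Rstar) :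
    frobSq (F * Fᵀ - Fstar * Fstarᵀ) + 2 * frobSq (Lᵀ * Lstar - Rᵀ * Rstar)
      = 4 * frobSq (L * Rᵀ - Lstar * Rstarᵀ) := by
  have hFF : Fᵀ * F = Lᵀ * L + Lᵀ * L := by rw [hF, vstack_tmul, ← hbal]
  have hFsFs : Fstarᵀ * Fstar = Lstarᵀ * Lstar + Lstarᵀ * Lstar := by
    rw [hFstar, vstack_tmul, ← hbal_star]
  have hFFs : Fᵀ * Fstar = Lᵀ * Lstar + Rᵀ * Rstar := by rw [hF, hFstar, vstack_tmul]
  have e1 : ((F * Fᵀ) * (F * Fᵀ)ᵀ).trace = 4 * ((Lᵀ * L) * (Lᵀ * L)ᵀ).trace := by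
    rw [tr4, hFF]
    simp only [transpose_add, Matrix.add_mul, Matrix.mul_add, Matrix.trace_add]
    ring
  have e2 : ((Fstar * Fstarᵀ) * (Fstar * Fstarᵀ)ᵀ).trace
      = 4 * ((Lstarᵀ * Lstar) * (Lstarᵀ * Lstar)ᵀ).trace := by
    rw [tr4, hFsFs]
    simp only [transpose_add, Matrix.add_mul, Matrix.mul_add, Matrix.trace_add]
    ring
  have e3 : ((F * Fᵀ) * (Fstar * Fstarᵀ)ᵀ).trace
      = ((Lᵀ * Lstar) * (Lᵀ * Lstar)ᵀ).trace + ((Rᵀ * Rstar) * (Rᵀ * Rstar)ᵀ).trace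
        + 2 * ((Lᵀ * Lstar) * (Rᵀ * Rstar)ᵀ).trace := by
    have hFsF : Fstarᵀ * F = Lstarᵀ * L + Rstarᵀ * R := by rw [hF, hFstar, vstack_tmul]
    rw [tr4, hFsF]
    simp only [transpose_add, Matrix.add_mul, Matrix.mul_add, Matrix.trace_add]
    simp only [show Lstarᵀ * L = (Lᵀ * Lstar)ᵀ by rw [transpose_mul, transpose_transpose],
      show Rstarᵀ * R = (Rᵀ * Rstar)ᵀ by rw [transpose_mul, transpose_transpose],
      transpose_transpose]
    rw [tr_transpose_mul (Lᵀ * Lstar) (Lᵀ * Lstar), tr_transpose_mul (Lᵀ * Lstar) (Rᵀ * Rstar),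
      tr_transpose_mul (Rᵀ * Rstar) (Lᵀ * Lstar), tr_transpose_mul (Rᵀ * Rstar) (Rᵀ * Rstar),
      tr_mul_transpose_comm (Rᵀ * Rstar) (Lᵀ * Lstar)]
    ring
  have e4 : ((L * Rᵀ) * (L * Rᵀ)ᵀ).trace = ((Lᵀ * L) * (Lᵀ * L)ᵀ).trace := by
    rw [tr4, ← hbal]
  have e5 : ((Lstar * Rstarᵀ) * (Lstar * Rstarᵀ)ᵀ).trace
      = ((Lstarᵀ * Lstar) * (Lstarᵀ * Lstar)ᵀ).trace := by
    rw [tr4, ← hbal_star]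
  have e6 : ((L * Rᵀ) * (Lstar * Rstarᵀ)ᵀ).trace
      = ((Lᵀ * Lstar) * (Rᵀ * Rstar)ᵀ).trace := by
    rw [tr4]
    rw [show Lstarᵀ * L = (Lᵀ * Lstar)ᵀ by rw [transpose_mul, transpose_transpose]]
    rw [show Rstarᵀ * R = (Rᵀ * Rstar)ᵀ by rw [transpose_mul, transpose_transpose]]
    rw [tr_transpose_mul, transpose_transpose]
  rw [frobSq_sub, frobSq_sub, frobSq_sub, e1, e2, e3, e4, e5, e6]
  ring

/-- For balanced factorizations (`LᵀL = RᵀR`, `L⋆ᵀL⋆ = R⋆ᵀR⋆`), the lifted symmetric error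
is controlled by the asymmetric error: `‖FFᵀ − F⋆F⋆ᵀ‖_F ≤ 2‖LRᵀ − L⋆R⋆ᵀ‖_F`, equivalently
`(1/2)‖FFᵀ − F⋆F⋆ᵀ‖_F ≤ ‖LRᵀ − L⋆R⋆ᵀ‖_F`. -/
theorem lifted_error_le_two_mul_asymmetric_error
    {n₁ n₂ r' : ℕ}
    (L Lstar : Matrix (Fin n₁) (Fin r') ℝ) (R Rstar : Matrix (Fin n₂) (Fin r') ℝ)
    (hbal : Lᵀ * L = Rᵀ * R)
    (hbal_star : Lstarᵀ * Lstar = Rstarᵀ * Rstar)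
    (F : Matrix (Fin n₁ ⊕ Fin n₂) (Fin r') ℝ) (hF : F = vstack L R)
    (Fstar : Matrix (Fin n₁ ⊕ Fin n₂) (Fin r') ℝ) (hFstar : Fstar = vstack Lstar Rstar) :
    frob (F * Fᵀ - Fstar * Fstarᵀ) ≤ 2 * frob (L * Rᵀ - Lstar * Rstarᵀ) ∧
    1 / 2 * frob (F * Fᵀ - Fstar * Fstarᵀ) ≤ frob (L * Rᵀ - Lstar * Rstarᵀ) := by
  have key := lifted_error_key_identity L Lstar R Rstar hbal hbal_star F hF Fstar hFstar
  have hle : frobSq (F * Fᵀ - Fstar * Fstarᵀ) ≤ 4 * frobSq (L * Rᵀ - Lstar * Rstarᵀ) := by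
    have := frobSq_nonneg (Lᵀ * Lstar - Rᵀ * Rstar)
    linarith
  have h1 : frob (F * Fᵀ - Fstar * Fstarᵀ) ≤ 2 * frob (L * Rᵀ - Lstar * Rstarᵀ) := by
    unfold frob
    calc Real.sqrt (frobSq (F * Fᵀ - Fstar * Fstarᵀ))
        ≤ Real.sqrt (4 * frobSq (L * Rᵀ - Lstar * Rstarᵀ)) := Real.sqrt_le_sqrt hle
      _ = 2 * Real.sqrt (frobSq (L * Rᵀ - Lstar * Rstarᵀ)) := by
          rw [Real.sqrt_mul (by norm_num) _,
            show Real.sqrt 4 = 2 by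
              rw [show (4:ℝ) = 2^2 by norm_num, Real.sqrt_sq (by norm_num)]]
  exact ⟨h1, by linarith⟩
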